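/- arXiv:1902.05055 — 3 statements merged into one kernel-verified Lean document; each statement's English description precedes it below -/
import Mathlib

section
/- Let k > r ≥ 2 be integers and set C = binomial(r+r², r) + 1. Let G be a finite simple graph containing an independent set X of size C such that no k+1 vertices of X have a common neighbour in G. Then for every r-partite r-graph H satisfying the (r,k)-cover property, there exists an edge-colouring of G with colours 1,…,r+1 such that every collection of monochromatic components covering V(G) has size at least τ(H) + 1. -/
/-- A set of vertices `T` covers a hypergraph with edge family `E` if it meets every edge. -/
def IsCover {V : Type*} (E : Set (Set V)) (T : Set V) : Prop :=
  ∀ e ∈ E, (e ∩ T).Nonempty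

/-- The cover number of a hypergraph: minimum size of a cover. -/
noncomputable def coverNumber {V : Type*} (E : Set (Set V)) : ℕ :=
  sInf {n | ∃ T : Set V, T.ncard = n ∧ IsCover E T}

/-- The `(k,ℓ)`-cover property: any at most `k` edges have a cover of size at most `ℓ`. -/
def CoverProperty {V : Type*} (E : Set (Set V)) (k ℓ : ℕ) : Prop :=
  ∀ S ⊆ E, S.ncard ≤ k → ∃ T : Set V, T.ncard ≤ ℓ ∧ IsCover S T

/-- `E` is an `r`-partite `r`-graph w.r.t. the partition `part`. -/
def IsPartite {V : Type*} (r : ℕ) (part : V → Fin r) (E : Set (Set V)) : Prop :=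
  ∀ e ∈ E, ∀ i : Fin r, (e ∩ part ⁻¹' {i}).ncard = 1

/-- A transversal cover: a cover containing exactly one vertex from each part. -/
def IsTransversalCover {V : Type*} (r : ℕ) (part : V → Fin r) (E : Set (Set V))
    (T : Set V) : Prop :=
  IsCover E T ∧ ∀ i : Fin r, (T ∩ part ⁻¹' {i}).ncard = 1

/-- The `(r,k)`-cover property: any at most `k` edges have a transversal cover. -/
def PartiteCoverProperty {V : Type*} (r : ℕ) (part : V → Fin r) (E : Set (Set V))
    (k : ℕ) : Prop :=
  ∀ S ⊆ E, S.ncard ≤ k → ∃ T : Set V, IsTransversalCover r part S T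

/-- The spanning subgraph of `G` consisting of the edges of colour `i`. -/
def colorSubgraph {V : Type*} (G : SimpleGraph V) {r : ℕ} (c : Sym2 V → Fin r)
    (i : Fin r) : SimpleGraph V where
  Adj u v := G.Adj u v ∧ c s(u, v) = i
  symm := ⟨fun u v h => ⟨h.1.symm, by rw [Sym2.eq_swap]; exact h.2⟩⟩
  loopless := ⟨fun v h => G.loopless.irrefl v h.1⟩

/-!
A maximal matching of `H` has at most `r` edges, since `r + 1` disjoint edges have no transversal
cover, so its vertices give `τ(H) ≤ r²`. A `τ`-critical subfamily `H₀ ⊆ H` has, for each edge `g`,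
a cover `T_g` of `H₀ - g` with `|T_g| < τ` missing `g`; the pairs `(g, T_g)` are cross-intersecting,
so Bollobás' set-pairs inequality gives `|H₀| ≤ C(r + τ - 1, r) ≤ C(r + r², r)`.

Place the edges of `H₀` on distinct vertices `Y ⊆ X \ {x₀}` and label every `y ∈ Y` by its edge
and every other vertex `v` by a transversal cover of the at most `k` edges placed on neighbours of
`v`. An edge `yv` with `y ∈ Y` gets colour `j` when the two labels share a vertex of part `j`;
every other edge gets the extra colour `Fin.last r`. Along a component of colour `j` the part-`j`
vertex of the label is constant, the vertices of `Y` are isolated in the extra colour, and `x₀` is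
isolated in all the others. Hence, apart from the component of `x₀`, the components of the colours
`j.castSucc` yield a vertex set `T`, and every edge of `H₀` missed by `T` needs its own singleton
component of the extra colour, so there are at least `τ` of them.
-/

open Finset

section Bollobas

variable {ι α : Type*} [DecidableEq α]

theorem sum_inv_choose_card_erase {A B X : Finset α} (hAB : Disjoint A B) (hX : A ∪ B ⊆ X)
    (hB : B.Nonempty) :
    ∑ x ∈ X \ A, ((#A + #(B.erase x)).choose #A : ℚ)⁻¹ = #X * ((#A + #B).choose #A : ℚ)⁻¹ := by
  obtain ⟨b, hb⟩ := Nat.exists_eq_add_one_of_ne_zero (card_ne_zero.2 hB)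
  have hin : (X \ A).filter (· ∈ B) = B := by
    ext x
    simp only [mem_filter, mem_sdiff, and_iff_right_iff_imp]
    exact fun hx => ⟨hX (mem_union_right _ hx), disjoint_right.1 hAB hx⟩
  have hout : (X \ A).filter (· ∉ B) = X \ (A ∪ B) := by
    ext x
    simp only [mem_filter, mem_sdiff, mem_union, not_or, and_assoc]
  have hcard : #(X \ (A ∪ B)) + (#A + #B) = #X := by
    rw [card_sdiff_of_subset hX, card_union_of_disjoint hAB,
      Nat.sub_add_cancel (card_union_of_disjoint hAB ▸ card_le_card hX)]
  have hsumB : ∑ x ∈ B, ((#A + #(B.erase x)).choose #A : ℚ)⁻¹ =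
      (b + 1) * ((#A + b).choose #A : ℚ)⁻¹ := by
    rw [sum_congr rfl fun x hx => by rw [card_erase_of_mem hx, hb, Nat.add_sub_cancel],
      sum_const, nsmul_eq_mul, hb]
    push_cast; rfl
  have hsumX : ∑ x ∈ X \ (A ∪ B), ((#A + #(B.erase x)).choose #A : ℚ)⁻¹ =
      #(X \ (A ∪ B)) * ((#A + #B).choose #A : ℚ)⁻¹ := by
    rw [sum_congr rfl fun x hx => by
      rw [erase_eq_of_notMem fun h => (mem_sdiff.1 hx).2 (mem_union_right _ h)], sum_const,
      nsmul_eq_mul]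
  have hchoose : ((#A + b).choose #A : ℚ) * (#A + b + 1) = (#A + b + 1).choose #A * (b + 1) := by
    have := Nat.choose_mul_succ_eq (#A + b) #A
    rw [show #A + b + 1 - #A = b + 1 by omega] at this
    exact_mod_cast this
  rw [← sum_filter_add_sum_filter_not _ (· ∈ B), hin, hout, hsumB, hsumX, ← hcard, hb]
  push_cast
  rw [← add_assoc]
  have h1 : ((#A + b).choose #A : ℚ) ≠ 0 := by exact_mod_cast (Nat.choose_pos (by omega)).ne'
  have h2 : ((#A + b + 1).choose #A : ℚ) ≠ 0 := by exact_mod_cast (Nat.choose_pos (by omega)).ne'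
  field_simp
  linear_combination -hchoose

theorem bollobas_sum_inv_choose_le_one (X : Finset α) (s : Finset ι) (A B : ι → Finset α)
    (hX : ∀ i ∈ s, A i ∪ B i ⊆ X) (hAB : ∀ i ∈ s, Disjoint (A i) (B i))
    (hcross : ∀ i ∈ s, ∀ j ∈ s, i ≠ j → ¬Disjoint (A i) (B j)) :
    ∑ i ∈ s, ((#(A i) + #(B i)).choose #(A i) : ℚ)⁻¹ ≤ 1 := by
  induction X using Finset.strongInduction generalizing s B with
  | H X ih =>
  by_cases hempty : ∃ i ∈ s, B i = ∅
  · obtain ⟨i, hi, hBi⟩ := hempty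
    have hs : s = {i} := eq_singleton_iff_unique_mem.2 ⟨hi, fun j hj => by
      by_contra hji
      exact hcross j hj i hi hji (hBi ▸ disjoint_empty_right _)⟩
    simp [hs, hBi]
  replace hempty : ∀ i ∈ s, (B i).Nonempty := fun i hi =>
    nonempty_iff_ne_empty.2 fun h => hempty ⟨i, hi, h⟩
  obtain rfl | ⟨i₀, hi₀⟩ := s.eq_empty_or_nonempty
  · simp
  have hXpos : (0 : ℚ) < #X := by
    obtain ⟨x, hx⟩ := hempty i₀ hi₀
    exact_mod_cast card_pos.2 ⟨x, hX i₀ hi₀ (mem_union_right _ hx)⟩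
  -- Removing `x` from every `B i` with `x ∉ A i` leaves a cross-intersecting family on `X - x`.
  have hdel : ∀ x ∈ X,
      ∑ i ∈ s.filter (x ∉ A ·), ((#(A i) + #((B i).erase x)).choose #(A i) : ℚ)⁻¹ ≤ 1 := by
    intro x hx
    refine ih (X.erase x) (erase_ssubset hx) _ (fun i => (B i).erase x) (fun i hi => ?_)
      (fun i hi => (hAB i (mem_filter.1 hi).1).mono_right (erase_subset _ _))
      (fun i hi j hj hij => ?_)
    · rw [mem_filter] at hi
      intro y hy
      refine mem_erase.2 ⟨?_, hX i hi.1 (union_subset_union_right (erase_subset _ _) hy)⟩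
      rintro rfl
      rcases mem_union.1 hy with hy | hy
      · exact hi.2 hy
      · exact notMem_erase _ _ hy
    · obtain ⟨y, hyA, hyB⟩ :=
        not_disjoint_iff.1 (hcross i (mem_filter.1 hi).1 j (mem_filter.1 hj).1 hij)
      refine not_disjoint_iff.2 ⟨y, hyA, mem_erase.2 ⟨?_, hyB⟩⟩
      rintro rfl
      exact (mem_filter.1 hi).2 hyA
  have hcount : #X * ∑ i ∈ s, ((#(A i) + #(B i)).choose #(A i) : ℚ)⁻¹ ≤ #X := by
    calc #X * ∑ i ∈ s, ((#(A i) + #(B i)).choose #(A i) : ℚ)⁻¹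
        = ∑ i ∈ s, ∑ x ∈ X \ A i, ((#(A i) + #((B i).erase x)).choose #(A i) : ℚ)⁻¹ := by
          rw [mul_sum]
          exact sum_congr rfl fun i hi =>
            (sum_inv_choose_card_erase (hAB i hi) (hX i hi) (hempty i hi)).symm
      _ = ∑ x ∈ X, ∑ i ∈ s.filter (x ∉ A ·),
            ((#(A i) + #((B i).erase x)).choose #(A i) : ℚ)⁻¹ :=
          sum_comm' fun i x => by
            simp only [mem_sdiff, mem_filter]
            tauto
      _ ≤ ∑ x ∈ X, 1 := sum_le_sum hdel
      _ = #X := by simp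
  exact le_of_mul_le_mul_left (by simpa using hcount) hXpos

theorem Nat.add_choose_le_add_choose {a b c d : ℕ} (hac : a ≤ c) (hbd : b ≤ d) :
    (a + b).choose a ≤ (c + d).choose c :=
  calc (a + b).choose a = (a + b).choose b := Nat.choose_symm_add
    _ ≤ (c + b).choose b := Nat.choose_le_choose _ (by omega)
    _ = (c + b).choose c := Nat.choose_symm_add.symm
    _ ≤ (c + d).choose c := Nat.choose_le_choose _ (by omega)

theorem bollobas_card_le_choose (s : Finset ι) (A B : ι → Finset α) {a b : ℕ}
    (hA : ∀ i ∈ s, #(A i) ≤ a) (hB : ∀ i ∈ s, #(B i) ≤ b)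
    (hAB : ∀ i ∈ s, Disjoint (A i) (B i))
    (hcross : ∀ i ∈ s, ∀ j ∈ s, i ≠ j → ¬Disjoint (A i) (B j)) :
    #s ≤ (a + b).choose a := by
  have hpos : (0 : ℚ) < (a + b).choose a := by exact_mod_cast Nat.choose_pos (by omega)
  have hsum := bollobas_sum_inv_choose_le_one (s.biUnion fun i => A i ∪ B i) s A B
    (fun i hi => subset_biUnion_of_mem (fun i => A i ∪ B i) hi) hAB hcross
  have hterm : ∀ i ∈ s,
      ((a + b).choose a : ℚ)⁻¹ ≤ ((#(A i) + #(B i)).choose #(A i) : ℚ)⁻¹ :=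
    fun i hi => inv_anti₀ (by exact_mod_cast Nat.choose_pos (by omega))
      (by exact_mod_cast Nat.add_choose_le_add_choose (hA i hi) (hB i hi))
  have : (#s : ℚ) * ((a + b).choose a : ℚ)⁻¹ ≤ 1 := by
    simpa using (sum_le_sum hterm).trans hsum
  exact_mod_cast (mul_inv_le_iff₀ hpos).1 this |>.trans_eq (one_mul _)

end Bollobas

theorem Set.eq_singleton_of_ncard_eq_one_of_mem {α : Type*} {s : Set α} {a : α}
    (hs : s.ncard = 1) (ha : a ∈ s) : s = {a} := by
  obtain ⟨b, rfl⟩ := Set.ncard_eq_one.1 hs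
  rw [Set.mem_singleton_iff.1 ha]

theorem Set.ncard_sUnion_le_mul {α : Type*} [Finite α] {M : Set (Set α)} {r : ℕ}
    (hM : ∀ e ∈ M, e.ncard ≤ r) : (⋃₀ M).ncard ≤ M.ncard * r := by
  obtain ⟨s, rfl⟩ := M.toFinite.exists_finset_coe
  rw [Set.sUnion_eq_biUnion, Set.ncard_coe_finset]
  exact (s.set_ncard_biUnion_le _).trans (sum_le_card_nsmul _ _ _ hM)

section Hypergraph

variable {V : Type*} {E : Set (Set V)}

theorem IsCover.coverNumber_le {T : Set V} (hT : IsCover E T) : coverNumber E ≤ T.ncard :=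
  Nat.sInf_le ⟨T, rfl, hT⟩

theorem nonempty_of_mem_of_coverNumber_ne_zero (hE : coverNumber E ≠ 0) {e : Set V}
    (he : e ∈ E) : e.Nonempty := by
  obtain ⟨_, T, -, hT⟩ : {n | ∃ T : Set V, T.ncard = n ∧ IsCover E T}.Nonempty :=
    Set.nonempty_iff_ne_empty.2 fun h => hE (Nat.sInf_eq_zero.2 (Or.inr h))
  exact (hT e he).mono Set.inter_subset_left

theorem ncard_le_of_ncard_inter_preimage_eq_one {r : ℕ} {part : V → Fin r} {T : Set V}
    (hT : ∀ i, (T ∩ part ⁻¹' {i}).ncard = 1) : T.ncard ≤ r := by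
  have hinj : Set.InjOn part T := fun x hx y hy hxy => by
    have hy' : y ∈ T ∩ part ⁻¹' {part x} := ⟨hy, hxy.symm⟩
    rw [Set.eq_singleton_of_ncard_eq_one_of_mem (hT (part x)) ⟨hx, rfl⟩] at hy'
    exact hy'.symm
  simpa using Set.ncard_le_ncard_of_injOn part (fun _ _ => Set.mem_univ _) hinj

theorem IsPartite.ncard_le {r : ℕ} {part : V → Fin r} (hE : IsPartite r part E) {e : Set V}
    (he : e ∈ E) : e.ncard ≤ r :=
  ncard_le_of_ncard_inter_preimage_eq_one (hE e he)

variable [Finite V]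

theorem IsCover.ncard_le_ncard {T : Set V} (hT : IsCover E T) (hE : E.Pairwise Disjoint) :
    E.ncard ≤ T.ncard := by
  obtain rfl | ⟨e, he⟩ := E.eq_empty_or_nonempty
  · simp
  have : Nonempty V := ⟨(hT e he).some⟩
  choose! f hf using hT
  refine Set.ncard_le_ncard_of_injOn f (fun e he => (hf e he).2) fun e he e' he' hee' => ?_
  by_contra hne
  exact Set.disjoint_left.1 (hE he he' hne) (hf e he).1 (hee' ▸ (hf e' he').1)

theorem le_ncard_uncovered_add_ncard (hne : ∀ e ∈ E, e.Nonempty) {n : ℕ}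
    (hE : ∀ T, IsCover E T → n ≤ T.ncard) (T : Set V) :
    n ≤ {e ∈ E | Disjoint e T}.ncard + T.ncard := by
  choose f hf using hne
  set U := {e ∈ E | Disjoint e T}
  set P := Set.range fun e : U => f e e.2.1
  have hcov : IsCover E (P ∪ T) := by
    intro e he
    by_cases heT : Disjoint e T
    · exact ⟨f e he, hf e he, Or.inl ⟨⟨e, he, heT⟩, rfl⟩⟩
    · obtain ⟨v, hv⟩ := Set.not_disjoint_iff_nonempty_inter.1 heT
      exact ⟨v, hv.1, Or.inr hv.2⟩
  have hP : P.ncard ≤ U.ncard := by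
    simpa only [Nat.card_coe_set_eq] using Finite.card_range_le fun e : U => f e e.2.1
  calc n ≤ (P ∪ T).ncard := hE _ hcov
    _ ≤ P.ncard + T.ncard := Set.ncard_union_le _ _
    _ ≤ U.ncard + T.ncard := by gcongr

theorem exists_critical_subfamily {n : ℕ} (hE : ∀ T, IsCover E T → n ≤ T.ncard) :
    ∃ E₀ ⊆ E, (∀ T, IsCover E₀ T → n ≤ T.ncard) ∧
      ∀ g ∈ E₀, ∃ T, IsCover (E₀ \ {g}) T ∧ T.ncard < n ∧ Disjoint g T := by
  obtain ⟨E₀, ⟨hE₀E, hE₀⟩, hmin⟩ := Set.Finite.exists_minimalFor Set.ncard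
    {F | F ⊆ E ∧ ∀ T, IsCover F T → n ≤ T.ncard} (Set.toFinite _) ⟨E, subset_rfl, hE⟩
  refine ⟨E₀, hE₀E, hE₀, fun g hg => ?_⟩
  have hlt := Set.ncard_sdiff_singleton_lt_of_mem hg
  obtain ⟨T, hT, hTn⟩ : ∃ T, IsCover (E₀ \ {g}) T ∧ T.ncard < n := by
    by_contra! h
    exact hlt.not_ge (hmin ⟨Set.sdiff_subset.trans hE₀E, h⟩ hlt.le)
  refine ⟨T, hT, hTn, Set.disjoint_iff_inter_eq_empty.2 <| Set.not_nonempty_iff_eq_empty.1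
    fun hgT => (hE₀ T fun e he => ?_).not_gt hTn⟩
  by_cases heg : e = g
  · exact heg ▸ hgT
  · exact hT e ⟨he, heg⟩

theorem ncard_le_choose_of_critical {a b : ℕ} (hE : ∀ e ∈ E, e.ncard ≤ a)
    (hcrit : ∀ g ∈ E, ∃ T, IsCover (E \ {g}) T ∧ T.ncard ≤ b ∧ Disjoint g T) :
    E.ncard ≤ (a + b).choose a := by
  classical
  have := Fintype.ofFinite V
  choose! T hT hTb hgT using hcrit
  rw [Set.ncard_eq_toFinset_card' E]
  refine bollobas_card_le_choose _ (fun g => g.toFinset) (fun g => (T g).toFinset)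
    (fun g hg => ?_) (fun g hg => ?_) (fun g hg => ?_) (fun g hg h hh hgh => ?_)
  · rw [← Set.ncard_eq_toFinset_card']; exact hE g (Set.mem_toFinset.1 hg)
  · rw [← Set.ncard_eq_toFinset_card']; exact hTb g (Set.mem_toFinset.1 hg)
  · exact Set.disjoint_toFinset.2 (hgT g (Set.mem_toFinset.1 hg))
  · rw [Set.disjoint_toFinset, Set.not_disjoint_iff_nonempty_inter]
    exact hT h (Set.mem_toFinset.1 hh) g ⟨Set.mem_toFinset.1 hg, hgh⟩

theorem coverNumber_le_mul_self {r : ℕ} {part : V → Fin r} (hne : ∀ e ∈ E, e.Nonempty)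
    (hpart : IsPartite r part E) (hprop : PartiteCoverProperty r part E (r + 1)) :
    coverNumber E ≤ r * r := by
  obtain ⟨M, ⟨hME, hM⟩, hmax⟩ := Set.Finite.exists_maximalFor id
    {M | M ⊆ E ∧ M.Pairwise Disjoint} (Set.toFinite _)
    ⟨∅, Set.empty_subset _, Set.pairwise_empty _⟩
  have hMr : M.ncard ≤ r := by
    by_contra! h
    obtain ⟨M', hM'M, hM'card⟩ := Set.exists_subset_card_eq (show r + 1 ≤ M.ncard by omega)
    obtain ⟨T, hT, hTpart⟩ := hprop M' (hM'M.trans hME) hM'card.le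
    have := hT.ncard_le_ncard (hM.mono hM'M)
    have := ncard_le_of_ncard_inter_preimage_eq_one hTpart
    omega
  have hcov : IsCover E (⋃₀ M) := by
    intro e he
    by_contra h
    rw [Set.not_nonempty_iff_eq_empty, ← Set.disjoint_iff_inter_eq_empty] at h
    have heM : e ∉ M := fun heM => (hne e he).ne_empty
      (disjoint_self.1 (h.mono_right (Set.subset_sUnion_of_mem heM)))
    refine heM (hmax ⟨Set.insert_subset he hME, hM.insert fun f hf _ => ?_⟩
      (Set.subset_insert e M) (Set.mem_insert e M))
    have hef := h.mono_right (Set.subset_sUnion_of_mem hf)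
    exact ⟨hef, hef.symm⟩
  calc coverNumber E ≤ (⋃₀ M).ncard := hcov.coverNumber_le
    _ ≤ M.ncard * r := Set.ncard_sUnion_le_mul fun e he => hpart.ncard_le (hME he)
    _ ≤ r * r := Nat.mul_le_mul_right r hMr

theorem exists_critical_subfamily_ncard_le {r : ℕ} {part : V → Fin r}
    (hne : ∀ e ∈ E, e.Nonempty) (hpart : IsPartite r part E)
    (hprop : PartiteCoverProperty r part E (r + 1)) :
    ∃ E₀ ⊆ E, (∀ T, IsCover E₀ T → coverNumber E ≤ T.ncard) ∧
      E₀.ncard ≤ (r + r ^ 2).choose r := by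
  have hτ := coverNumber_le_mul_self hne hpart hprop
  obtain ⟨E₀, hE₀E, hE₀, hcrit⟩ :=
    exists_critical_subfamily fun T (hT : IsCover E T) => hT.coverNumber_le
  refine ⟨E₀, hE₀E, hE₀, ?_⟩
  calc E₀.ncard ≤ (r + (coverNumber E - 1)).choose r :=
        ncard_le_choose_of_critical (fun e he => hpart.ncard_le (hE₀E he)) fun g hg =>
          (hcrit g hg).imp fun T ⟨hT, hTn, hgT⟩ => ⟨hT, by omega, hgT⟩
    _ ≤ (r + r ^ 2).choose r := Nat.choose_le_choose r (by rw [sq]; omega)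

end Hypergraph

section Colouring

variable {V W : Type*} {r : ℕ}

theorem eq_of_colorSubgraph_reachable {G : SimpleGraph V} {n : ℕ} {c : Sym2 V → Fin n}
    {i : Fin n} {u x : V} (hx : ∀ v, G.Adj x v → c s(x, v) ≠ i)
    (h : (colorSubgraph G c i).Reachable u x) : u = x := by
  by_contra hne
  obtain ⟨v, hv⟩ := h.nonempty_neighborSet_right hne
  exact hx v hv.1 hv.2

theorem inter_preimage_eq_of_reachable {H : SimpleGraph V} {L : V → Set W} {part : W → Fin r}
    {j : Fin r} (hL : ∀ v, (L v ∩ part ⁻¹' {j}).ncard = 1)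
    (hH : ∀ u v, H.Adj u v → ∃ w ∈ L u ∩ L v, part w = j) {u v : V} (h : H.Reachable u v) :
    L u ∩ part ⁻¹' {j} = L v ∩ part ⁻¹' {j} := by
  rw [SimpleGraph.reachable_iff_reflTransGen] at h
  induction h with
  | refl => rfl
  | tail _ hadj ih =>
    obtain ⟨w, ⟨hwu, hwv⟩, hw⟩ := hH _ _ hadj
    rw [ih, Set.eq_singleton_of_ncard_eq_one_of_mem (hL _) ⟨hwu, hw⟩,
      Set.eq_singleton_of_ncard_eq_one_of_mem (hL _) ⟨hwv, hw⟩]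

open Classical in
noncomputable def labelColouring (L : V → Set W) (part : W → Fin r) (Y : Set V) (z : Sym2 V) :
    Fin (r + 1) :=
  if h : (∃ y ∈ z, y ∈ Y) ∧ {w | ∀ v ∈ z, w ∈ L v}.Nonempty then (part h.2.some).castSucc
  else Fin.last r

variable {G : SimpleGraph V} {L : V → Set W} {part : W → Fin r} {Y : Set V}

theorem labelColouring_eq_castSucc {u v : V} {j : Fin r}
    (h : labelColouring L part Y s(u, v) = j.castSucc) : ∃ w ∈ L u ∩ L v, part w = j := by
  unfold labelColouring at h
  split_ifs at h with hc
  · exact ⟨hc.2.some, by simpa using hc.2.some_mem, Fin.castSucc_injective _ h⟩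
  · exact absurd h (Fin.castSucc_ne_last j).symm

theorem labelColouring_ne_last {u v : V} (hu : u ∈ Y) (huv : (L u ∩ L v).Nonempty) :
    labelColouring L part Y s(u, v) ≠ Fin.last r := by
  unfold labelColouring
  rw [dif_pos ⟨⟨u, Sym2.mem_mk_left u v, hu⟩, by simpa using huv⟩]
  exact Fin.castSucc_ne_last _

theorem labelColouring_eq_last {u v : V} (hu : u ∉ Y) (hv : v ∉ Y) :
    labelColouring L part Y s(u, v) = Fin.last r := by
  unfold labelColouring
  rw [dif_neg]
  simp [hu, hv]

theorem inter_preimage_eq_of_labelColouring_reachable {j : Fin r}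
    (hL : ∀ v, (L v ∩ part ⁻¹' {j}).ncard = 1) {u v : V}
    (h : (colorSubgraph G (labelColouring L part Y) j.castSucc).Reachable u v) :
    L u ∩ part ⁻¹' {j} = L v ∩ part ⁻¹' {j} :=
  inter_preimage_eq_of_reachable (H := colorSubgraph G _ _) hL
    (fun _ _ huv => labelColouring_eq_castSucc huv.2) h

theorem eq_of_labelColouring_reachable_last {u y : V} (hy : y ∈ Y)
    (hL : ∀ v, G.Adj y v → (L y ∩ L v).Nonempty)
    (h : (colorSubgraph G (labelColouring L part Y) (Fin.last r)).Reachable u y) : u = y :=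
  eq_of_colorSubgraph_reachable (fun v hv => labelColouring_ne_last hy (hL v hv)) h

theorem eq_of_labelColouring_reachable_castSucc {u x : V} {j : Fin r} (hx : x ∉ Y)
    (hxY : ∀ v, G.Adj x v → v ∉ Y)
    (h : (colorSubgraph G (labelColouring L part Y) j.castSucc).Reachable u x) : u = x :=
  eq_of_colorSubgraph_reachable (fun v hv => by
    rw [labelColouring_eq_last hx (hxY v hv)]
    exact (Fin.castSucc_ne_last j).symm) h

end Colouring

section Counting

variable {V W : Type*} {r : ℕ} {L : V → Set W} {part : W → Fin r}

theorem ncard_setOf_eq_castSucc_le_one (hL : ∀ v j, (L v ∩ part ⁻¹' {j}).ncard = 1)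
    (i : Fin (r + 1)) (v : V) : {w | i = (part w).castSucc ∧ w ∈ L v}.ncard ≤ 1 := by
  obtain ⟨j, rfl⟩ | rfl := Fin.eq_castSucc_or_eq_last i
  · have : {w | j.castSucc = (part w).castSucc ∧ w ∈ L v} = L v ∩ part ⁻¹' {j} := by
      ext w
      simp [eq_comm, and_comm]
    rw [this, hL v j]
  · simp [(Fin.castSucc_ne_last _).symm]

theorem ncard_biUnion_setOf_eq_castSucc_le (hL : ∀ v j, (L v ∩ part ⁻¹' {j}).ncard = 1)
    (S : Finset (Fin (r + 1) × V)) :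
    (⋃ p ∈ S, {w | p.1 = (part w).castSucc ∧ w ∈ L p.2}).ncard ≤ #S :=
  calc _ ≤ ∑ p ∈ S, {w | p.1 = (part w).castSucc ∧ w ∈ L p.2}.ncard := S.set_ncard_biUnion_le _
    _ ≤ ∑ _p ∈ S, 1 := sum_le_sum fun p _ => ncard_setOf_eq_castSucc_le_one hL p.1 p.2
    _ = #S := (card_eq_sum_ones S).symm

theorem add_one_le_card_of_forall_reachable [Finite W] {G : SimpleGraph V}
    {c : Sym2 V → Fin (r + 1)} {Y : Set V} {x₀ : V} {F : Set (Set W)} {n : ℕ}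
    (hL : ∀ v j, (L v ∩ part ⁻¹' {j}).ncard = 1)
    (hfib : ∀ (j : Fin r) {u v}, (colorSubgraph G c j.castSucc).Reachable u v →
      L u ∩ part ⁻¹' {j} = L v ∩ part ⁻¹' {j})
    (hY : ∀ y ∈ Y, ∀ {u}, (colorSubgraph G c (Fin.last r)).Reachable u y → u = y)
    (hx₀ : ∀ (j : Fin r) {u}, (colorSubgraph G c j.castSucc).Reachable u x₀ → u = x₀)
    (hx₀Y : x₀ ∉ Y) (hFY : F ⊆ L '' Y) (hF : ∀ T, n ≤ {g ∈ F | Disjoint g T}.ncard + T.ncard)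
    {S : Finset (Fin (r + 1) × V)}
    (hS : ∀ v, ∃ p ∈ S, (colorSubgraph G c p.1).Reachable p.2 v) :
    n + 1 ≤ #S := by
  classical
  obtain ⟨p₀, hp₀S, hp₀⟩ := hS x₀
  have hYcov : ∀ y ∈ Y, ∃ p ∈ S.erase p₀, (colorSubgraph G c p.1).Reachable p.2 y := by
    intro y hy
    obtain ⟨p, hpS, hp⟩ := hS y
    refine ⟨p, mem_erase.2 ⟨?_, hpS⟩, hp⟩
    rintro rfl
    obtain ⟨i, v⟩ := p
    obtain ⟨j, rfl⟩ | rfl := Fin.eq_castSucc_or_eq_last i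
    · obtain rfl := hx₀ j hp₀
      exact hx₀Y (hx₀ j hp.symm ▸ hy)
    · obtain rfl := hY y hy hp
      exact hx₀Y (hY v hy hp₀.symm ▸ hy)
  set Sg := (S.erase p₀).filter (¬·.1 = Fin.last r)
  set Sb := (S.erase p₀).filter (·.1 = Fin.last r)
  set T := ⋃ p ∈ Sg, {w | p.1 = (part w).castSucc ∧ w ∈ L p.2}
  have hU : {g ∈ F | Disjoint g T} ⊆ (fun p : Fin (r + 1) × V => L p.2) '' Sb := by
    rintro g ⟨hgF, hgT⟩
    obtain ⟨y, hy, rfl⟩ := hFY hgF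
    obtain ⟨⟨i, v⟩, hp, hpy⟩ := hYcov y hy
    obtain ⟨j, rfl⟩ | rfl := Fin.eq_castSucc_or_eq_last i
    · exfalso
      obtain ⟨w, hwy, hwj⟩ := Set.nonempty_of_ncard_ne_zero (hL y j ▸ one_ne_zero)
      have hwv : w ∈ L v ∩ part ⁻¹' {j} := by
        rw [hfib j hpy]
        exact ⟨hwy, hwj⟩
      refine Set.disjoint_left.1 hgT hwy (Set.mem_biUnion (x := (j.castSucc, v)) ?_ ?_)
      · exact mem_filter.2 ⟨hp, Fin.castSucc_ne_last j⟩
      · exact ⟨congrArg Fin.castSucc (Set.mem_singleton_iff.1 hwv.2).symm, hwv.1⟩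
    · exact ⟨_, mem_filter.2 ⟨hp, rfl⟩, congrArg L (hY y hy hpy)⟩
  have hUcard : {g ∈ F | Disjoint g T}.ncard ≤ #Sb :=
    (Set.ncard_le_ncard hU (Set.toFinite _)).trans
      ((Set.ncard_image_le (Set.toFinite _)).trans (Set.ncard_coe_finset _).le)
  have hsplit : #Sb + #Sg = #S - 1 := by
    rw [card_filter_add_card_filter_not, card_erase_of_mem hp₀S]
  have := hF T
  have hT : T.ncard ≤ #Sg := ncard_biUnion_setOf_eq_castSucc_le hL Sg
  have := card_pos.2 ⟨p₀, hp₀S⟩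
  omega

end Counting

section Labelling

variable {V W : Type*} {G : SimpleGraph V} {Z : Finset V} {k : ℕ}

theorem ncard_setOf_adj_le (hZ : ∀ S ⊆ Z, k + 1 ≤ #S → ¬∃ v, ∀ u ∈ S, G.Adj v u) (v : V) :
    {u | u ∈ Z ∧ G.Adj v u}.ncard ≤ k := by
  classical
  rw [← coe_filter, Set.ncard_coe_finset]
  by_contra! hk
  obtain ⟨S, hS, hSk⟩ := exists_subset_card_eq hk
  exact hZ S (hS.trans (filter_subset _ _)) hSk.ge ⟨v, fun u hu => (mem_filter.1 (hS hu)).2⟩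

theorem exists_transversal_labelling [Nonempty V] [Finite W] {r : ℕ} {part : W → Fin r}
    {E F : Set (Set W)} (hZind : ∀ u ∈ Z, ∀ v ∈ Z, u ≠ v → ¬G.Adj u v)
    (hZnbr : ∀ S ⊆ Z, k + 1 ≤ #S → ¬∃ v, ∀ u ∈ S, G.Adj v u)
    (hpart : IsPartite r part E) (hprop : PartiteCoverProperty r part E k) (hFE : F ⊆ E)
    (hF : F.ncard ≤ #Z) :
    ∃ (L : V → Set W) (Y : Set V), Y ⊆ Z ∧ (∀ v j, (L v ∩ part ⁻¹' {j}).ncard = 1) ∧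
      F ⊆ L '' Y ∧ ∀ y ∈ Y, ∀ v, G.Adj y v → (L y ∩ L v).Nonempty := by
  classical
  obtain ⟨f, hfZ, hf⟩ := F.toFinite.exists_injOn_of_encard_le (t := (Z : Set V)) (by
    rw [← F.toFinite.cast_ncard_eq, Set.encard_coe_eq_coe_finsetCard]
    exact_mod_cast hF)
  have hTv : ∀ v, ∃ T, IsTransversalCover r part {g ∈ F | G.Adj v (f g)} T := fun v =>
    hprop _ (fun g hg => hFE hg.1) <| (Set.ncard_le_ncard_of_injOn f
      (t := {u | u ∈ Z ∧ G.Adj v u}) (fun g hg => ⟨hfZ hg.1, hg.2⟩)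
      (hf.mono fun g hg => hg.1)).trans (ncard_setOf_adj_le hZnbr v)
  choose Tv hTv using hTv
  refine ⟨fun v => if v ∈ f '' F then Function.invFunOn f F v else Tv v, f '' F,
    Set.image_subset_iff.2 hfZ, fun v j => ?_, fun g hg => ?_, ?_⟩
  · dsimp only
    split_ifs with hv
    · exact hpart _ (hFE (Function.invFunOn_mem hv)) j
    · exact (hTv v).2 j
  · exact ⟨f g, Set.mem_image_of_mem f hg,
      by simp [Set.mem_image_of_mem f hg, hf.leftInvOn_invFunOn hg]⟩
  · rintro _ ⟨g, hg, rfl⟩ v hadj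
    have hv : v ∉ f '' F := by
      rintro ⟨g', hg', rfl⟩
      exact hZind _ (hfZ hg) _ (hfZ hg') (G.ne_of_adj hadj) hadj
    simp only [Set.mem_image_of_mem f hg, if_true, hv, if_false, hf.leftInvOn_invFunOn hg]
    exact (hTv v).1 g ⟨hg, hadj.symm⟩

end Labelling

theorem stmt4_general {VG : Type} (r k : ℕ) (hk : r < k)
    (G : SimpleGraph VG) (X : Finset VG)
    (hXcard : X.card = (r + r ^ 2).choose r + 1)
    (hXind : ∀ u ∈ X, ∀ v ∈ X, u ≠ v → ¬ G.Adj u v)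
    (hXnbr : ∀ S ⊆ X, k + 1 ≤ S.card → ¬ ∃ v : VG, ∀ u ∈ S, G.Adj v u)
    (W : Type) [Fintype W] (part : W → Fin r) (E : Set (Set W))
    (hpart : IsPartite r part E) (hprop : PartiteCoverProperty r part E k) :
    ∃ c : Sym2 VG → Fin (r + 1),
      ∀ S : Finset (Fin (r + 1) × VG),
        (∀ v : VG, ∃ p ∈ S, (colorSubgraph G c p.1).Reachable p.2 v) →
        coverNumber E + 1 ≤ S.card := by
  classical
  obtain ⟨x₀, hx₀⟩ : X.Nonempty := card_pos.1 (by omega)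
  by_cases hτ : coverNumber E = 0
  · refine ⟨fun _ => 0, fun S hS => ?_⟩
    obtain ⟨p, hp, -⟩ := hS x₀
    simpa [hτ] using card_pos.2 ⟨p, hp⟩
  have hne : ∀ e ∈ E, e.Nonempty := fun e he => nonempty_of_mem_of_coverNumber_ne_zero hτ he
  obtain ⟨E₀, hE₀E, hE₀, hE₀card⟩ :=
    exists_critical_subfamily_ncard_le hne hpart fun S hS hSk => hprop S hS (by omega)
  rw [← Nat.add_sub_cancel ((r + r ^ 2).choose r) 1, ← hXcard, ← card_erase_of_mem hx₀]
    at hE₀card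
  have : Nonempty VG := ⟨x₀⟩
  obtain ⟨L, Y, hYX, hL, hE₀Y, hYL⟩ := exists_transversal_labelling
    (fun u hu v hv => hXind u (mem_of_mem_erase hu) v (mem_of_mem_erase hv))
    (fun S hS => hXnbr S (hS.trans (erase_subset _ _))) hpart hprop hE₀E hE₀card
  have hx₀Y : x₀ ∉ Y := fun h => notMem_erase x₀ X (hYX h)
  have hx₀N : ∀ v, G.Adj x₀ v → v ∉ Y := fun v hadj hv =>
    hXind x₀ hx₀ v (mem_of_mem_erase (hYX hv)) (G.ne_of_adj hadj) hadj
  exact ⟨labelColouring L part Y, fun S hS => add_one_le_card_of_forall_reachable hL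
    (fun j _ _ => inter_preimage_eq_of_labelColouring_reachable (hL · j))
    (fun y hy _ => eq_of_labelColouring_reachable_last hy (hYL y hy))
    (fun _ _ => eq_of_labelColouring_reachable_castSucc hx₀Y hx₀N) hx₀Y hE₀Y
    (le_ncard_uncovered_add_ncard (fun e he => hne e (hE₀E he)) hE₀) hS⟩

/-- given a graph `G` with an independent set `X` of size
`C(r+r², r) + 1` in which no `k+1` vertices have a common neighbour, and given any
`r`-partite `r`-graph `H` with the `(r,k)`-cover property, there is an
`(r+1)`-edge-colouring of `G` for which every cover of `V(G)` by monochromatic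
components has size at least `τ(H) + 1`. -/
theorem stmt4 {VG : Type} [Fintype VG] (r k : ℕ) (hr : 2 ≤ r) (hk : r < k)
    (G : SimpleGraph VG) (X : Finset VG)
    (hXcard : X.card = (r + r ^ 2).choose r + 1)
    (hXind : ∀ u ∈ X, ∀ v ∈ X, u ≠ v → ¬ G.Adj u v)
    (hXnbr : ∀ S ⊆ X, k + 1 ≤ S.card → ¬ ∃ v : VG, ∀ u ∈ S, G.Adj v u)
    (W : Type) [Fintype W] (part : W → Fin r) (E : Set (Set W))
    (hpart : IsPartite r part E) (hprop : PartiteCoverProperty r part E k) :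
    ∃ c : Sym2 VG → Fin (r + 1),
      ∀ S : Finset (Fin (r + 1) × VG),
        (∀ v : VG, ∃ p ∈ S, (colorSubgraph G c p.1).Reachable p.2 v) →
        coverNumber E + 1 ≤ S.card :=
  stmt4_general r k hk G X hXcard hXind hXnbr W part E hpart hprop
end

section
/- Let r ≥ 2, ℓ ≥ 1 and k be integers with k ≥ binomial(r+ℓ, ℓ). Then every r-uniform hypergraph satisfying the (k,ℓ)-cover property has cover number at most ℓ. -/
/-
A minimal subfamily `S ⊆ E` without a cover of size at most `ℓ` has, for each edge `e ∈ S`,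
a cover `T e` of `S \ {e}` of size at most `ℓ`; it misses `e`, since otherwise it would cover `S`.
The pairs `(e, T e)` then form a Bollobás set-pair system: `e ∩ T e = ∅`, and `e ∩ T f ≠ ∅` for
`e ≠ f`. Bollobás's inequality `∑ 1 / C(|A i| + |B i|, |A i|) ≤ 1`, proved by induction on the
ground set, deleting one vertex at a time, gives `|S| ≤ C(r + ℓ, ℓ) ≤ k`, so the `(k, ℓ)`-cover
property covers `S` after all.
-/

open Finset

lemma add_choose_le_add_choose {a b a' b' : ℕ} (ha : a' ≤ a) (hb : b' ≤ b) :
    (a' + b').choose a' ≤ (a + b).choose a := calc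
  (a' + b').choose a' = (a' + b').choose b' := Nat.choose_symm_add
  _ ≤ (a + b').choose b' := Nat.choose_le_choose _ (by omega)
  _ = (a + b').choose a := Nat.choose_symm_add.symm
  _ ≤ (a + b).choose a := Nat.choose_le_choose _ (by omega)

lemma cast_choose_inv_mul_succ (a b : ℕ) :
    ((a + b).choose a : ℚ)⁻¹ * (b + 1) = ((a + b + 1).choose a : ℚ)⁻¹ * (a + b + 1) := by
  have h := Nat.choose_mul_succ_eq (a + b) a
  rw [show a + b + 1 - a = b + 1 by omega] at h
  have h1 : (0 : ℚ) < (a + b).choose a := by exact_mod_cast Nat.choose_pos (by omega)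
  have h2 : (0 : ℚ) < (a + b + 1).choose a := by exact_mod_cast Nat.choose_pos (by omega)
  field_simp
  exact_mod_cast (mul_comm _ _).trans h.symm

section SetPairSystem

variable {ι V : Type*} [DecidableEq V]

structure IsSetPairSystem (s : Finset ι) (A B : ι → Finset V) : Prop where
  disjoint : ∀ i ∈ s, Disjoint (A i) (B i)
  inter_nonempty : ∀ i ∈ s, ∀ j ∈ s, i ≠ j → (A i ∩ B j).Nonempty

lemma sum_sdiff_inv_choose_card_erase {X A B : Finset V} (hA : A ⊆ X) (hB : B ⊆ X)
    (hAB : Disjoint A B) (hBne : B.Nonempty) :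
    ∑ x ∈ X \ A, ((#A + #(B.erase x)).choose #A : ℚ)⁻¹ = #X * ((#A + #B).choose #A : ℚ)⁻¹ := by
  obtain ⟨b, hb⟩ : ∃ b, #B = b + 1 := ⟨#B - 1, by have := hBne.card_pos; omega⟩
  have hsplit : X \ A = X \ (A ∪ B) ∪ B := by
    ext x
    have hxB := @hB x
    have hxAB : x ∈ A → x ∉ B := fun h => disjoint_left.1 hAB h
    simp only [mem_sdiff, mem_union]
    tauto
  have hcard : #(X \ (A ∪ B)) + (#A + #B) = #X := by
    rw [← card_union_of_disjoint hAB, card_sdiff_add_card_eq_card (union_subset hA hB)]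
  have hout : ∑ x ∈ X \ (A ∪ B), ((#A + #(B.erase x)).choose #A : ℚ)⁻¹ =
      ∑ x ∈ X \ (A ∪ B), ((#A + #B).choose #A : ℚ)⁻¹ := sum_congr rfl fun x hx => by
    rw [erase_eq_of_notMem fun h => (mem_sdiff.1 hx).2 (mem_union_right _ h)]
  have hin : ∑ x ∈ B, ((#A + #(B.erase x)).choose #A : ℚ)⁻¹ =
      ∑ x ∈ B, ((#A + b).choose #A : ℚ)⁻¹ := sum_congr rfl fun x hx => by
    rw [card_erase_of_mem hx, hb, Nat.add_sub_cancel]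
  rw [hsplit, sum_union (disjoint_sdiff_self_left.mono_right subset_union_right), hout, hin,
    sum_const, sum_const, nsmul_eq_mul, nsmul_eq_mul, ← hcard, hb, ← add_assoc]
  push_cast
  linear_combination cast_choose_inv_mul_succ (#A) b

namespace IsSetPairSystem

variable {s : Finset ι} {A B : ι → Finset V}

lemma eq_singleton_of_eq_empty (h : IsSetPairSystem s A B) {i : ι} (hi : i ∈ s)
    (hB : B i = ∅) : s = {i} := by
  refine eq_singleton_iff_unique_mem.2 ⟨hi, fun j hj => ?_⟩
  by_contra hji
  simpa [hB] using h.inter_nonempty j hj i hi hji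

lemma erase (h : IsSetPairSystem s A B) (x : V) :
    IsSetPairSystem {i ∈ s | x ∉ A i} A (fun i => (B i).erase x) where
  disjoint i hi := (h.disjoint i (mem_filter.1 hi).1).mono_right (erase_subset _ _)
  inter_nonempty i hi j hj hij := by
    obtain ⟨y, hy⟩ := h.inter_nonempty i (mem_filter.1 hi).1 j (mem_filter.1 hj).1 hij
    rw [mem_inter] at hy
    have hyx : y ≠ x := by rintro rfl; exact (mem_filter.1 hi).2 hy.1
    exact ⟨y, mem_inter.2 ⟨hy.1, mem_erase.2 ⟨hyx, hy.2⟩⟩⟩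

theorem sum_inv_choose_le_one {X : Finset V} (h : IsSetPairSystem s A B)
    (hX : ∀ i ∈ s, A i ⊆ X ∧ B i ⊆ X) :
    ∑ i ∈ s, ((#(A i) + #(B i)).choose #(A i) : ℚ)⁻¹ ≤ 1 := by
  induction X using Finset.strongInduction generalizing s B with
  | H X ih =>
  -- `sum_sdiff_inv_choose_card_erase` needs every `B i` nonempty; otherwise `s` is a singleton.
  by_cases hempty : ∃ i ∈ s, B i = ∅
  · obtain ⟨i, hi, hBi⟩ := hempty
    simp [h.eq_singleton_of_eq_empty hi hBi, hBi]
  push Not at hempty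
  rcases s.eq_empty_or_nonempty with rfl | ⟨i₀, hi₀⟩
  · simp
  have hXpos : (0 : ℚ) < #X := by
    obtain ⟨x, hx⟩ := hempty i₀ hi₀
    exact_mod_cast card_pos.2 ⟨x, (hX i₀ hi₀).2 hx⟩
  have hstep : ∀ x ∈ X,
      ∑ i ∈ s with x ∉ A i, ((#(A i) + #((B i).erase x)).choose #(A i) : ℚ)⁻¹ ≤ 1 :=
    fun x hx => ih (X.erase x) (erase_ssubset hx) (h.erase x) fun i hi =>
      ⟨subset_erase.2 ⟨(hX i (mem_filter.1 hi).1).1, (mem_filter.1 hi).2⟩,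
        erase_subset_erase x (hX i (mem_filter.1 hi).1).2⟩
  -- Each weight is recovered `#X` times from the systems on the sets `X.erase x`.
  have hdouble : #X * ∑ i ∈ s, ((#(A i) + #(B i)).choose #(A i) : ℚ)⁻¹ ≤ #X := calc
    _ = ∑ i ∈ s, ∑ x ∈ X \ A i, ((#(A i) + #((B i).erase x)).choose #(A i) : ℚ)⁻¹ := by
      rw [mul_sum]
      refine sum_congr rfl fun i hi => ?_
      rw [sum_sdiff_inv_choose_card_erase (hX i hi).1 (hX i hi).2 (h.disjoint i hi) (hempty i hi)]
    _ = ∑ x ∈ X, ∑ i ∈ s with x ∉ A i, ((#(A i) + #((B i).erase x)).choose #(A i) : ℚ)⁻¹ :=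
      sum_comm' fun i x => by
        simp only [mem_sdiff, mem_filter]
        tauto
    _ ≤ ∑ x ∈ X, 1 := sum_le_sum hstep
    _ = #X := by simp
  exact le_of_mul_le_mul_left (hdouble.trans (mul_one _).ge) hXpos

theorem card_le_choose (h : IsSetPairSystem s A B) {a b : ℕ} (hA : ∀ i ∈ s, #(A i) ≤ a)
    (hB : ∀ i ∈ s, #(B i) ≤ b) : #s ≤ (a + b).choose b := by
  have hpos : (0 : ℚ) < (a + b).choose a := by exact_mod_cast Nat.choose_pos (by omega)
  have hsum := h.sum_inv_choose_le_one (X := s.biUnion fun i => A i ∪ B i) fun i hi =>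
    ⟨fun x hx => mem_biUnion.2 ⟨i, hi, mem_union_left _ hx⟩,
      fun x hx => mem_biUnion.2 ⟨i, hi, mem_union_right _ hx⟩⟩
  have hcard : (#s : ℚ) / (a + b).choose a ≤ 1 := calc
    _ = ∑ i ∈ s, ((a + b).choose a : ℚ)⁻¹ := by rw [div_eq_mul_inv, sum_const, nsmul_eq_mul]
    _ ≤ ∑ i ∈ s, ((#(A i) + #(B i)).choose #(A i) : ℚ)⁻¹ := sum_le_sum fun i hi =>
      inv_anti₀ (by exact_mod_cast Nat.choose_pos (by omega))
        (by exact_mod_cast add_choose_le_add_choose (hA i hi) (hB i hi))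
    _ ≤ 1 := hsum
  rw [← Nat.choose_symm_add]
  exact_mod_cast (div_le_one₀ hpos).1 hcard

end IsSetPairSystem

end SetPairSystem

section Hypergraph

variable {V : Type*}

def HasCoverOfCardLE (E : Set (Set V)) (ℓ : ℕ) : Prop :=
  ∃ T : Set V, T.ncard ≤ ℓ ∧ IsCover E T

lemma coverNumber_le_ncard {E : Set (Set V)} {T : Set V} (hT : IsCover E T) :
    coverNumber E ≤ T.ncard :=
  Nat.sInf_le ⟨T, rfl, hT⟩

lemma ncard_le_choose_of_minimal [Fintype V] {S : Set (Set V)} {r ℓ : ℕ}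
    (hunif : ∀ e ∈ S, e.ncard ≤ r) (hS : Minimal (fun S => ¬ HasCoverOfCardLE S ℓ) S) :
    S.ncard ≤ (r + ℓ).choose ℓ := by
  classical
  have hcover : ∀ e ∈ S, HasCoverOfCardLE (S \ {e}) ℓ := fun e he =>
    not_not.1 (hS.not_prop_of_ssubset (Set.sdiff_singleton_ssubset.2 he))
  choose! T hTcard hTcover using hcover
  have hdisj : ∀ e ∈ S, Disjoint e (T e) := fun e he => by
    refine Set.disjoint_iff_inter_eq_empty.2 (Set.not_nonempty_iff_eq_empty.1 fun hmeet => ?_)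
    refine hS.prop ⟨T e, hTcard e he, fun f hf => ?_⟩
    obtain rfl | hfe := eq_or_ne f e
    · exact hmeet
    · exact hTcover e he f ⟨hf, hfe⟩
  have hsys : IsSetPairSystem S.toFinset (fun e => e.toFinset) (fun e => (T e).toFinset) := by
    refine ⟨fun e he => Set.disjoint_toFinset.2 (hdisj e (Set.mem_toFinset.1 he)),
      fun e he f hf hef => ?_⟩
    obtain ⟨x, hx⟩ := hTcover f (Set.mem_toFinset.1 hf) e ⟨Set.mem_toFinset.1 he, hef⟩
    exact ⟨x, by simpa using hx⟩
  rw [Set.ncard_eq_toFinset_card']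
  refine hsys.card_le_choose (fun e he => ?_) fun e he => ?_
  · rw [← Set.ncard_eq_toFinset_card']; exact hunif e (Set.mem_toFinset.1 he)
  · rw [← Set.ncard_eq_toFinset_card']; exact hTcard e (Set.mem_toFinset.1 he)

end Hypergraph

theorem stmt5_general (r ℓ k : ℕ) (hk : (r + ℓ).choose ℓ ≤ k)
    {V : Type*} [Fintype V] (E : Set (Set V)) (hunif : ∀ e ∈ E, e.ncard = r)
    (hprop : CoverProperty E k ℓ) :
    coverNumber E ≤ ℓ := by
  by_contra hlt
  have hE : ¬ HasCoverOfCardLE E ℓ := fun ⟨T, hT, hcover⟩ =>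
    hlt ((coverNumber_le_ncard hcover).trans hT)
  obtain ⟨S, hSE, hS⟩ :=
    exists_minimal_le_of_wellFoundedLT (fun S => ¬ HasCoverOfCardLE S ℓ) E hE
  exact hS.prop (hprop S hSE <| (ncard_le_choose_of_minimal
    (fun e he => (hunif e (hSE he)).le) hS).trans hk)

/-- for `k ≥ C(r+ℓ, ℓ)`, every `r`-uniform hypergraph with the
`(k,ℓ)`-cover property has cover number at most `ℓ`. -/
theorem stmt5 (r ℓ k : ℕ) (hr : 2 ≤ r) (hl : 1 ≤ ℓ) (hk : (r + ℓ).choose ℓ ≤ k)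
    {V : Type*} [Fintype V] (E : Set (Set V)) (hunif : ∀ e ∈ E, e.ncard = r)
    (hprop : CoverProperty E k ℓ) :
    coverNumber E ≤ ℓ :=
  stmt5_general r ℓ k hk E hunif hprop
end

section
/- Let r ≥ 2 and k ≥ 1 be integers. Then there exists an r-partite r-graph satisfying the (r,k)-cover property whose cover number is at least r³/(50k). -/
/-!
Take `w` disjoint copies of the `r`-partite hypergraph whose parts are copies of
`β = {0, …, b}` and whose edges are the graphs of the vectors `x : Fin r → β` of Hamming weight
at most `b`. A set meeting a copy in at most `b` vertices misses the edge of some vector of weight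
at most `b` (put `x q ≠ 0` only where the set contains the vertex `0` of part `q`), so every cover
has at least `w (b + 1)` vertices.

Given at most `k` edges, split the edges of each copy into blocks of at most `t`. The edges of a
block all vanish outside at most `t b` parts, and there are at most `min w k + k / t` blocks; if
this number plus `t b` is at most `r`, Hall's theorem gives each block its own part on which all
its edges vanish, and the vertices `0` of the corresponding copies form a transversal cover.
With `w ≈ r / 4`, `t ≈ 4 k / r` and `b ≈ r / (2 t)`, or with a matching when `k ≤ r` or
`r² ≤ 50 k`, the cover number is at least `r³ / (50 k)`.
-/

open Finset

theorem Finset.sum_nat_div_le {α : Type*} (s : Finset α) (f : α → ℕ) (t : ℕ) :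
    ∑ i ∈ s, f i / t ≤ (∑ i ∈ s, f i) / t := by
  rcases t.eq_zero_or_pos with rfl | ht
  · simp
  rw [Nat.le_div_iff_mul_le ht, Finset.sum_mul]
  exact Finset.sum_le_sum fun i _ => Nat.div_mul_le_self _ _

theorem Finset.exists_chunking {α : Type*} (s : Finset α) {t : ℕ} (ht : 0 < t) :
    ∃ h : α → ℕ, (∀ j, #{e ∈ s | h e = j} ≤ t) ∧ ∀ e ∈ s, h e ≤ (#s - 1) / t := by
  classical
  set idx : α → ℕ := fun e => s.toList.idxOf e
  have idx_lt : ∀ e ∈ s, idx e < #s := fun e he => by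
    simpa [idx] using List.idxOf_lt_length_iff.mpr (mem_toList.mpr he)
  refine ⟨fun e => idx e / t, fun j => ?_, fun e he => Nat.div_le_div_right (by
    have := idx_lt e he; omega)⟩
  calc #{e ∈ s | idx e / t = j} ≤ #(Ico (j * t) (j * t + t)) := by
        refine card_le_card_of_injOn idx (fun e he => ?_) fun e he e' he' hee' => ?_
        · obtain ⟨-, rfl⟩ := mem_filter.1 he
          exact mem_Ico.2 ⟨Nat.div_mul_le_self _ _, Nat.lt_div_mul_add ht⟩
        · simp only [coe_filter, Set.mem_ofPred_eq] at he he'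
          exact (List.idxOf_inj (mem_toList.mpr he.1)).1 hee'
    _ = t := by simp

theorem exists_injective_of_card_le_card {ι α : Type*} [Fintype ι]
    (A : ι → Finset α) (hA : ∀ i, Fintype.card ι ≤ #(A i)) :
    ∃ f : ι → α, Function.Injective f ∧ ∀ i, f i ∈ A i := by
  classical
  refine (all_card_le_biUnion_card_iff_exists_injective A).1 fun s => ?_
  obtain rfl | ⟨i, hi⟩ := s.eq_empty_or_nonempty
  · simp
  calc #s ≤ Fintype.card ι := card_le_univ s
    _ ≤ #(A i) := hA i
    _ ≤ #(s.biUnion A) := card_le_card (subset_biUnion_of_mem A hi)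

theorem exists_colouring_avoiding {α C ι : Type*} [Fintype ι] [DecidableEq C] [Nonempty C]
    (S : Finset α) (copy : α → C) (bad : α → Finset ι) {t b : ℕ}
    (ht : 0 < t) (hbad : ∀ e ∈ S, #(bad e) ≤ b)
    (hS : #(S.image copy) + #S / t + t * b ≤ Fintype.card ι) :
    ∃ σ : ι → C, ∀ e ∈ S, ∃ q ∉ bad e, σ q = copy e := by
  classical
  choose h h_card h_le using fun c => exists_chunking {e ∈ S | copy e = c} ht
  set block : α → C × ℕ := fun e => (copy e, h (copy e) e)
  set G := S.image block
  have card_G : #G + t * b ≤ Fintype.card ι := by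
    have hsub : G ⊆ (S.image copy).biUnion fun c =>
        (range ((#{e ∈ S | copy e = c} - 1) / t + 1)).image (c, ·) := by
      simp only [G, subset_iff, mem_image, mem_biUnion, mem_range]
      rintro _ ⟨e, he, rfl⟩
      exact ⟨copy e, ⟨e, he, rfl⟩, h (copy e) e,
        Nat.lt_succ_of_le (h_le _ e (mem_filter.2 ⟨he, rfl⟩)), rfl⟩
    calc #G + t * b
        ≤ ∑ c ∈ S.image copy, ((#{e ∈ S | copy e = c} - 1) / t + 1) + t * b := by
          gcongr
          exact (card_le_card hsub).trans <| card_biUnion_le.trans <|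
            sum_le_sum fun c _ => card_image_le.trans (card_range _).le
      _ ≤ (∑ c ∈ S.image copy, #{e ∈ S | copy e = c}) / t + #(S.image copy) + t * b := by
          rw [sum_add_distrib, sum_const, smul_eq_mul, mul_one]
          gcongr
          exact (sum_nat_div_le _ _ t).trans
            (Nat.div_le_div_right (sum_le_sum fun c _ => Nat.sub_le _ _))
      _ ≤ Fintype.card ι := by rw [← card_eq_sum_card_image]; omega
  have card_block : ∀ g, #{e ∈ S | block e = g} ≤ t := by
    rintro ⟨c, j⟩
    refine (card_le_card fun e he => ?_).trans (h_card c j)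
    simp only [block, mem_filter, Prod.mk.injEq] at he ⊢
    obtain ⟨he, rfl, rfl⟩ := he
    exact ⟨⟨he, rfl⟩, rfl⟩
  set A : G → Finset ι := fun g => univ \ {e ∈ S | block e = g}.biUnion bad
  have card_A : ∀ g, Fintype.card G ≤ #(A g) := by
    intro g
    have : #({e ∈ S | block e = g}.biUnion bad) ≤ t * b :=
      card_biUnion_le.trans <| (sum_le_card_nsmul _ _ b fun e he => hbad e (mem_filter.1 he).1).trans
        (by rw [smul_eq_mul]; exact Nat.mul_le_mul_right b (card_block g))
    rw [Fintype.card_coe, card_sdiff_of_subset (subset_univ _), card_univ]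
    omega
  obtain ⟨f, hf, hfA⟩ := exists_injective_of_card_le_card A card_A
  refine ⟨Function.extend f (fun g => (g : C × ℕ).1) fun _ => Classical.arbitrary C,
    fun e he => ⟨f ⟨block e, mem_image_of_mem block he⟩, fun hbad => ?_, hf.extend_apply _ _ _⟩⟩
  have := hfA ⟨block e, mem_image_of_mem block he⟩
  simp only [A, mem_sdiff, mem_biUnion, mem_filter, not_exists, not_and] at this
  exact this.2 e ⟨he, rfl⟩ hbad

/-- The vertex `(q, c, y)` is the vertex `y` of part `q` in copy `c`. -/
def graphEdge {ι C β : Type*} (c : C) (x : ι → β) : Set (ι × C × β) :=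
  {v | v.2.1 = c ∧ v.2.2 = x v.1}

def lowWeightEdges (ι C β : Type*) [Fintype ι] [Zero β] [DecidableEq β] (b : ℕ) :
    Set (Set (ι × C × β)) :=
  {e | ∃ c x, hammingNorm x ≤ b ∧ e = graphEdge c x}

section LowWeight

variable {ι C β : Type*}

theorem mk_mem_graphEdge (c : C) (x : ι → β) (q : ι) : (q, c, x q) ∈ graphEdge c x :=
  ⟨rfl, rfl⟩

theorem graphEdge_inter_fst_preimage (c : C) (x : ι → β) (q : ι) :
    graphEdge c x ∩ Prod.fst ⁻¹' {q} = {(q, c, x q)} := by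
  ext ⟨q', c', y⟩
  simp only [graphEdge, Set.mem_inter_iff, Set.mem_ofPred_eq, Set.mem_preimage,
    Set.mem_singleton_iff, Prod.mk.injEq]
  constructor
  · rintro ⟨⟨rfl, rfl⟩, rfl⟩
    exact ⟨rfl, rfl, rfl⟩
  · rintro ⟨rfl, rfl, rfl⟩
    exact ⟨⟨rfl, rfl⟩, rfl⟩

theorem graphEdge_injective [Nonempty ι] :
    Function.Injective fun p : C × (ι → β) => graphEdge p.1 p.2 := by
  rintro ⟨c, x⟩ ⟨c', x'⟩ (h : graphEdge c x = graphEdge c' x')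
  have hmem : ∀ q, (q, c, x q) ∈ graphEdge c' x' := fun q => h ▸ mk_mem_graphEdge c x q
  exact Prod.ext (hmem (Classical.arbitrary ι)).1 (funext fun q => (hmem q).2)

theorem exists_hammingNorm_le_forall_notMem [Fintype ι] [Fintype β] [Zero β] [DecidableEq β]
    (T : Finset (ι × β)) (hT : #T < Fintype.card β) :
    ∃ x : ι → β, hammingNorm x ≤ #T ∧ ∀ q, (q, x q) ∉ T := by
  classical
  have : ∀ q, ∃ y, (q, y) ∉ T ∧ (y ≠ 0 → (q, 0) ∈ T) := by
    intro q
    by_cases h0 : (q, (0 : β)) ∈ T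
    · obtain ⟨y, hy⟩ : ∃ y, (q, y) ∉ T := by
        by_contra! hall
        exact hT.not_ge <| card_le_card_of_injOn (fun y => (q, y)) (fun y _ => hall y)
          fun y _ y' _ h => (Prod.mk.inj h).2
      exact ⟨y, hy, fun _ => h0⟩
    · exact ⟨0, h0, fun h => (h rfl).elim⟩
  choose x hxT hx0 using this
  refine ⟨x, (card_le_card (t := T.image Prod.fst) fun q hq => ?_).trans card_image_le, hxT⟩
  exact mem_image.2 ⟨(q, 0), hx0 q (mem_filter.1 hq).2, rfl⟩

theorem isPartite_lowWeightEdges {r : ℕ} [Zero β] [DecidableEq β] (b : ℕ) :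
    IsPartite r Prod.fst (lowWeightEdges (Fin r) C β b) := by
  rintro _ ⟨c, x, -, rfl⟩ q
  rw [graphEdge_inter_fst_preimage, Set.ncard_singleton]

theorem le_card_filter_of_isCover [Fintype ι] [Fintype β] [Zero β] [DecidableEq C]
    [DecidableEq β] {b : ℕ} (hb : b < Fintype.card β) {T : Finset (ι × C × β)}
    (hT : IsCover (lowWeightEdges ι C β b) ↑T) (c : C) : b + 1 ≤ #{v ∈ T | v.2.1 = c} := by
  classical
  by_contra! hlt
  set Tc : Finset (ι × β) := {v ∈ T | v.2.1 = c}.image fun v => (v.1, v.2.2)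
  have hTc : #Tc ≤ b := card_image_le.trans (Nat.le_of_lt_succ hlt)
  obtain ⟨x, hx, hxT⟩ := exists_hammingNorm_le_forall_notMem Tc (hTc.trans_lt hb)
  obtain ⟨v, ⟨hvc, hvx⟩, hv⟩ := hT _ ⟨c, x, hx.trans hTc, rfl⟩
  exact hxT v.1 (mem_image.2 ⟨v, mem_filter.2 ⟨hv, hvc⟩, by rw [← hvx]⟩)

theorem le_coverNumber_lowWeightEdges [Fintype ι] [Nonempty ι] [Fintype C] [Fintype β] [Zero β]
    [DecidableEq β] {b : ℕ} (hb : b < Fintype.card β) :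
    Fintype.card C * (b + 1) ≤ coverNumber (lowWeightEdges ι C β b) := by
  classical
  have cover_univ : IsCover (lowWeightEdges ι C β b) Set.univ := by
    rintro _ ⟨c, x, -, rfl⟩
    exact ⟨_, mk_mem_graphEdge c x (Classical.arbitrary ι), trivial⟩
  refine le_csInf ⟨_, _, rfl, cover_univ⟩ ?_
  rintro _ ⟨T, rfl, hT⟩
  lift T to Finset (ι × C × β) using T.toFinite
  rw [Set.ncard_coe_finset, card_eq_sum_card_fiberwise (f := fun v => v.2.1) (t := univ)
    fun v _ => mem_univ _, ← card_univ, ← smul_eq_mul, ← sum_const]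
  exact sum_le_sum fun c _ => le_card_filter_of_isCover hb hT c

theorem partiteCoverProperty_lowWeightEdges {r k t b : ℕ} [NeZero r] [Fintype C] [Nonempty C]
    [Fintype β] [Zero β] [DecidableEq β] (ht : 0 < t)
    (hr : min (Fintype.card C) k + k / t + t * b ≤ r) :
    PartiteCoverProperty r Prod.fst (lowWeightEdges (Fin r) C β b) k := by
  classical
  intro S hSE hSk
  set L : Finset (C × (Fin r → β)) := {p | hammingNorm p.2 ≤ b ∧ graphEdge p.1 p.2 ∈ S}
  have hL : #L ≤ k :=
    calc #L = #(L.image fun p => graphEdge p.1 p.2) :=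
          (card_image_of_injective L graphEdge_injective).symm
      _ = (↑(L.image fun p => graphEdge p.1 p.2) : Set (Set (Fin r × C × β))).ncard :=
          (Set.ncard_coe_finset _).symm
      _ ≤ S.ncard := Set.ncard_le_ncard (fun e he => by
          obtain ⟨p, hp, rfl⟩ := mem_image.1 he
          exact (mem_filter.1 hp).2.2) S.toFinite
      _ ≤ k := hSk
  have hcount : #(L.image Prod.fst) + #L / t + t * b ≤ Fintype.card (Fin r) := by
    have : #(L.image Prod.fst) ≤ min (Fintype.card C) k :=
      le_min (card_le_univ _) (card_image_le.trans hL)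
    have : #L / t ≤ k / t := Nat.div_le_div_right hL
    rw [Fintype.card_fin]
    omega
  obtain ⟨σ, hσ⟩ := exists_colouring_avoiding L Prod.fst (fun p => {q | p.2 q ≠ 0}) ht
    (fun p hp => (mem_filter.1 hp).2.1) hcount
  refine ⟨Set.range fun q => (q, σ q, 0), fun e he => ?_, fun q => ?_⟩
  · obtain ⟨c, x, hx, rfl⟩ := hSE he
    obtain ⟨q, hq, hσq⟩ := hσ (c, x) (mem_filter.2 ⟨mem_univ _, hx, he⟩)
    refine ⟨(q, c, 0), ⟨rfl, ?_⟩, q, by simp [hσq]⟩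
    simpa [eq_comm] using hq
  · have : (Set.range fun q => (q, σ q, (0 : β))) ∩ Prod.fst ⁻¹' {q} = {(q, σ q, 0)} := by
      ext ⟨q', c, y⟩
      simp +contextual [eq_comm, and_comm]
    rw [this, Set.ncard_singleton]

end LowWeight

section Equiv

variable {V W : Type*} (e : V ≃ W) {r : ℕ} {part : V → Fin r} {E : Set (Set V)}

theorem image_inter_preimage_comp_symm (s : Set V) (i : Fin r) :
    e '' s ∩ (part ∘ e.symm) ⁻¹' {i} = e '' (s ∩ part ⁻¹' {i}) := by
  rw [Set.image_inter e.injective, e.image_eq_preimage_symm (part ⁻¹' _), Set.preimage_comp]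

theorem isCover_image_equiv {T : Set V} : IsCover (Set.image e '' E) (e '' T) ↔ IsCover E T := by
  simp only [IsCover, Set.forall_mem_image, ← Set.image_inter e.injective, Set.image_nonempty]

theorem IsPartite.image_equiv (h : IsPartite r part E) :
    IsPartite r (part ∘ e.symm) (Set.image e '' E) := by
  rintro _ ⟨s, hs, rfl⟩ i
  rw [image_inter_preimage_comp_symm, Set.ncard_image_of_injective _ e.injective, h s hs i]

theorem PartiteCoverProperty.image_equiv {k : ℕ} (h : PartiteCoverProperty r part E k) :
    PartiteCoverProperty r (part ∘ e.symm) (Set.image e '' E) k := by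
  intro S' hS' hk
  obtain ⟨S, hSE, rfl⟩ := Set.subset_image_iff.1 hS'
  rw [Set.ncard_image_of_injective _ (Set.image_injective.2 e.injective)] at hk
  obtain ⟨T, hT, hTpart⟩ := h S hSE hk
  refine ⟨e '' T, (isCover_image_equiv e).2 hT, fun i => ?_⟩
  rw [image_inter_preimage_comp_symm, Set.ncard_image_of_injective _ e.injective, hTpart i]

theorem coverNumber_image_equiv : coverNumber (Set.image e '' E) = coverNumber E := by
  simp only [coverNumber, (Set.image_surjective.2 e.surjective).exists,
    Set.ncard_image_of_injective _ e.injective, isCover_image_equiv]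

end Equiv

theorem exists_lowWeight_parameters {r k : ℕ} (hr : 2 ≤ r) (hk : 1 ≤ k) :
    ∃ w b t : ℕ, 0 < t ∧ min w k + k / t + t * b ≤ r ∧ r ^ 3 ≤ 50 * k * (w * (b + 1)) := by
  have hk_div : k / (k + 1) = 0 := Nat.div_eq_of_lt k.lt_succ_self
  by_cases hkr : k ≤ r
  · refine ⟨r ^ 3, 0, k + 1, k.succ_pos, by omega, ?_⟩
    rw [zero_add, mul_one]
    exact Nat.le_mul_of_pos_left _ (by omega)
  by_cases hrr : r * r ≤ 50 * k
  · refine ⟨r, 0, k + 1, k.succ_pos, by omega, ?_⟩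
    calc r ^ 3 = r * r * r := by ring
      _ ≤ 50 * k * r := Nat.mul_le_mul_right r hrr
      _ = 50 * k * (r * (0 + 1)) := by ring
  rw [not_le] at hkr hrr
  have hr51 : 51 ≤ r := by nlinarith
  -- `q + 1` is the least `t` with `4 k < t r`, so that `t r ≤ 5 k`.
  set q := 4 * k / r
  have hq_le : q * r ≤ 4 * k := Nat.div_mul_le_self _ _
  have hq_lt : 4 * k < q * r + r := Nat.lt_div_mul_add (by omega)
  have ht : 0 < q + 1 := q.succ_pos
  refine ⟨r / 4, r / (2 * (q + 1)), q + 1, ht, ?_, ?_⟩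
  · have : k / (q + 1) * (q + 1) ≤ k := Nat.div_mul_le_self k (q + 1)
    have : 4 * (k / (q + 1)) < r := by nlinarith
    have : r / (2 * (q + 1)) * (2 * (q + 1)) ≤ r := Nat.div_mul_le_self r _
    have : 2 * ((q + 1) * (r / (2 * (q + 1)))) ≤ r := by linarith
    omega
  · have hw : r ≤ 5 * (r / 4) := by omega
    have hb : r < 2 * (q + 1) * (r / (2 * (q + 1)) + 1) := Nat.lt_mul_div_succ r (by omega)
    have htr : (q + 1) * r ≤ 5 * k := by nlinarith
    calc r ^ 3 = r * r * r := by ring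
      _ ≤ 5 * (r / 4) * (2 * (q + 1) * (r / (2 * (q + 1)) + 1)) * r := by gcongr
      _ = 10 * (r / 4 * (r / (2 * (q + 1)) + 1)) * ((q + 1) * r) := by ring
      _ ≤ 10 * (r / 4 * (r / (2 * (q + 1)) + 1)) * (5 * k) := by gcongr
      _ = 50 * k * (r / 4 * (r / (2 * (q + 1)) + 1)) := by ring

/-- for every `k ≥ 1` and `r ≥ 2`, there is an `r`-partite `r`-graph
with the `(r,k)`-cover property whose cover number is at least `r³/(50k)`. -/
theorem stmt17 (r k : ℕ) (hr : 2 ≤ r) (hk : 1 ≤ k) :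
    ∃ (n : ℕ) (part : Fin n → Fin r) (E : Set (Set (Fin n))),
      IsPartite r part E ∧ PartiteCoverProperty r part E k ∧
      ((r : ℝ) ^ 3 / (50 * (k : ℝ)) ≤ (coverNumber E : ℝ)) := by
  obtain ⟨w, b, t, ht, hcond, hbound⟩ := exists_lowWeight_parameters hr hk
  have : NeZero r := ⟨by omega⟩
  have : NeZero w := ⟨by rintro rfl; simp at hbound; omega⟩
  let e := Fintype.equivFin (Fin r × Fin w × Fin (b + 1))
  refine ⟨_, Prod.fst ∘ e.symm, Set.image e '' lowWeightEdges (Fin r) (Fin w) (Fin (b + 1)) b,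
    (isPartite_lowWeightEdges b).image_equiv e,
    (partiteCoverProperty_lowWeightEdges ht (by simpa using hcond)).image_equiv e, ?_⟩
  have hτ := le_coverNumber_lowWeightEdges (ι := Fin r) (C := Fin w) (β := Fin (b + 1))
    (b := b) (by simp)
  rw [coverNumber_image_equiv, div_le_iff₀ (by positivity)]
  simp only [Fintype.card_fin] at hτ
  exact_mod_cast hbound.trans (by rw [mul_comm]; exact Nat.mul_le_mul_right _ hτ)
end
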